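/- Let Y be a set and φ : ℝ × Y → Y a flow. Suppose Σ ⊂ Y and ε₀ > 0 are such that the map (t,p) ↦ φ^t(p) restricted to (−ε₀, ε₀) × Σ is injective. Let μ be a measure on Y invariant under every φ^t. Then for every measurable A ⊂ Σ, the quantity ε⁻¹ μ({φ^t(p) : p ∈ A, 0 < t < ε}) is independent of ε ∈ (0, ε₀). -/
import Mathlib

open MeasureTheory

set_option linter.unusedSectionVars false

namespace TMWDAux
variable {Y : Type*} [MeasurableSpace Y]

def fb (φ : ℝ → Y → Y) (A : Set Y) (a b : ℝ) : Set Y :=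
  {y : Y | ∃ p ∈ A, ∃ t : ℝ, a < t ∧ t < b ∧ y = φ t p}

lemma fb_mono {φ : ℝ → Y → Y} {A : Set Y} {a a' b b' : ℝ} (ha : a' ≤ a) (hb : b ≤ b') :
    fb φ A a b ⊆ fb φ A a' b' := by
  rintro y ⟨p, hp, t, h1, h2, rfl⟩
  exact ⟨p, hp, t, lt_of_le_of_lt ha h1, lt_of_lt_of_le h2 hb, rfl⟩

lemma image_fb {φ : ℝ → Y → Y} (hφadd : ∀ t s : ℝ, φ (t + s) = φ t ∘ φ s)
    (A : Set Y) (s a b : ℝ) :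
    φ s '' fb φ A a b = fb φ A (a + s) (b + s) := by
  ext y
  constructor
  · rintro ⟨x, ⟨p, hp, t, h1, h2, rfl⟩, rfl⟩
    refine ⟨p, hp, t + s, by linarith, by linarith, ?_⟩
    rw [add_comm t s, hφadd]; rfl
  · rintro ⟨p, hp, t, h1, h2, rfl⟩
    refine ⟨φ (t - s) p, ⟨p, hp, t - s, by linarith, by linarith, rfl⟩, ?_⟩
    have h : s + (t - s) = t := by ring
    rw [← Function.comp_apply (f := φ s), ← hφadd, h]

lemma meas_fb {φ : ℝ → Y → Y} (hφadd : ∀ t s : ℝ, φ (t + s) = φ t ∘ φ s)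
    {μ : Measure Y} (hinv : ∀ (t : ℝ) (B : Set Y), μ (φ t '' B) = μ B)
    (A : Set Y) (a b : ℝ) :
    μ (fb φ A a b) = μ (fb φ A 0 (b - a)) := by
  have h := image_fb hφadd A a 0 (b - a)
  rw [zero_add, sub_add_cancel] at h
  rw [← h, hinv]

lemma fb_upper {φ : ℝ → Y → Y} (hφadd : ∀ t s : ℝ, φ (t + s) = φ t ∘ φ s)
    {μ : Measure Y} (hinv : ∀ (t : ℝ) (B : Set Y), μ (φ t '' B) = μ B)
    (A : Set Y) (k : ℕ) {δ η : ℝ} (hδ : 0 < δ) (hη : 0 < η) :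
    μ (fb φ A 0 (k * δ)) ≤ k * μ (fb φ A 0 (δ + η)) := by
  have hsub : fb φ A 0 (k * δ) ⊆ ⋃ i ∈ Finset.range k, fb φ A (i * δ - η) ((i + 1) * δ) := by
    rintro y ⟨p, hp, t, h1, h2, rfl⟩
    have ht0 : 0 ≤ t / δ := le_of_lt (div_pos h1 hδ)
    set i := ⌊t / δ⌋₊ with hi
    have hik : i < k := by
      rw [hi, Nat.floor_lt ht0]
      exact (div_lt_iff₀ hδ).mpr (by linarith [h2])
    have hlo : (i : ℝ) * δ ≤ t := by
      have := Nat.floor_le ht0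
      calc (i : ℝ) * δ ≤ (t / δ) * δ := by nlinarith
        _ = t := by field_simp
    have hhi : t < ((i : ℝ) + 1) * δ := by
      have := Nat.lt_floor_add_one (t / δ)
      calc t = (t / δ) * δ := by field_simp
        _ < ((i : ℝ) + 1) * δ := by nlinarith
    exact Set.mem_biUnion (Finset.mem_range.mpr hik)
      ⟨p, hp, t, by linarith, hhi, rfl⟩
  calc μ (fb φ A 0 (k * δ)) ≤ ∑ i ∈ Finset.range k, μ (fb φ A (i * δ - η) ((i + 1) * δ)) :=
        (measure_mono hsub).trans (measure_biUnion_finset_le _ _)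
    _ = ∑ i ∈ Finset.range k, μ (fb φ A 0 (δ + η)) := by
        refine Finset.sum_congr rfl fun i _ => ?_
        rw [meas_fb hφadd hinv]
        congr 1
        ring
    _ = k * μ (fb φ A 0 (δ + η)) := by
        rw [Finset.sum_const, Finset.card_range, nsmul_eq_mul]

lemma fb_lower {φ : ℝ → Y → Y} (hφadd : ∀ t s : ℝ, φ (t + s) = φ t ∘ φ s)
    {μ : Measure Y} (hinv : ∀ (t : ℝ) (B : Set Y), μ (φ t '' B) = μ B)
    {S : Set Y} {ε₀ : ℝ}
    (hinj : Set.InjOn (fun q : ℝ × Y => φ q.1 q.2) (Set.Ioo (-ε₀) ε₀ ×ˢ S))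
    {A : Set Y} (hA : A ⊆ S)
    (hbox : ∀ a b : ℝ, 0 ≤ a → a < b → b ≤ ε₀ →
      MeasurableSet {y : Y | ∃ p ∈ A, ∃ t : ℝ, a < t ∧ t < b ∧ y = φ t p})
    (n : ℕ) {δ : ℝ} (hδ : 0 < δ) (hnδ : n * δ ≤ ε₀) :
    (n : ENNReal) * μ (fb φ A 0 δ) ≤ μ (fb φ A 0 (n * δ)) := by
  set B : ℕ → Set Y := fun i => fb φ A (i * δ) ((i + 1) * δ) with hB
  have hle : ∀ i : ℕ, i < n → ((i : ℝ) + 1) * δ ≤ ε₀ := fun i hi => by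
    have : ((i : ℝ) + 1) ≤ (n : ℝ) := by exact_mod_cast Nat.succ_le_of_lt hi
    nlinarith
  have hBmeas : ∀ i ∈ Finset.range n, MeasurableSet (B i) := fun i hi => by
    exact hbox _ _ (by positivity) (by nlinarith) (hle i (Finset.mem_range.mp hi))
  have hdisj : (↑(Finset.range n) : Set ℕ).PairwiseDisjoint B := by
    intro i hi j hj hij
    simp only [Finset.coe_range, Set.mem_Iio] at hi hj
    refine Set.disjoint_left.mpr ?_
    rintro y ⟨p, hp, t, ht1, ht2, rfl⟩ ⟨q, hq, s, hs1, hs2, hys⟩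
    have htmem : (t, p) ∈ Set.Ioo (-ε₀) ε₀ ×ˢ S := by
      constructor
      · constructor
        · have : (0:ℝ) ≤ i * δ := by positivity
          have hε₀pos : 0 < ε₀ := lt_of_le_of_lt (by linarith) (lt_of_lt_of_le ht2 (hle i hi))
          linarith
        · exact lt_of_lt_of_le ht2 (hle i hi)
      · exact hA hp
    have hsmem : (s, q) ∈ Set.Ioo (-ε₀) ε₀ ×ˢ S := by
      constructor
      · constructor
        · have : (0:ℝ) ≤ j * δ := by positivity
          have hε₀pos : 0 < ε₀ := lt_of_le_of_lt (by linarith) (lt_of_lt_of_le hs2 (hle j hj))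
          linarith
        · exact lt_of_lt_of_le hs2 (hle j hj)
      · exact hA hq
    have heq : (t, p) = (s, q) := hinj htmem hsmem hys
    have hts : t = s := congrArg Prod.fst heq
    rcases lt_or_gt_of_ne hij with h | h
    · have : ((i : ℝ) + 1) ≤ (j : ℝ) := by exact_mod_cast Nat.succ_le_of_lt h
      nlinarith
    · have : ((j : ℝ) + 1) ≤ (i : ℝ) := by exact_mod_cast Nat.succ_le_of_lt h
      nlinarith
  have hsub : (⋃ i ∈ Finset.range n, B i) ⊆ fb φ A 0 (n * δ) := by
    intro y hy
    rw [Set.mem_iUnion₂] at hy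
    obtain ⟨i, hi, p, hp, t, ht1, ht2, rfl⟩ := hy
    have hi' := Finset.mem_range.mp hi
    have h1 : (0:ℝ) ≤ i * δ := by positivity
    have h2 : ((i:ℝ) + 1) ≤ (n : ℝ) := by exact_mod_cast Nat.succ_le_of_lt hi'
    exact ⟨p, hp, t, by linarith, by nlinarith, rfl⟩
  have hBeq : ∀ i : ℕ, μ (B i) = μ (fb φ A 0 δ) := fun i => by
    have : μ (B i) = μ (fb φ A 0 (((i:ℝ) + 1) * δ - (i:ℝ) * δ)) := meas_fb hφadd hinv _ _ _
    rw [this]; congr 1; ring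
  calc (n : ENNReal) * μ (fb φ A 0 δ)
      = ∑ i ∈ Finset.range n, μ (B i) := by
        simp only [hBeq, Finset.sum_const, Finset.card_range, nsmul_eq_mul]
    _ = μ (⋃ i ∈ Finset.range n, B i) := (measure_biUnion_finset hdisj hBmeas).symm
    _ ≤ μ (fb φ A 0 (n * δ)) := measure_mono hsub

lemma fb_key {φ : ℝ → Y → Y} (hφadd : ∀ t s : ℝ, φ (t + s) = φ t ∘ φ s)
    {μ : Measure Y} (hinv : ∀ (t : ℝ) (B : Set Y), μ (φ t '' B) = μ B)
    {S : Set Y} {ε₀ : ℝ}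
    (hinj : Set.InjOn (fun q : ℝ × Y => φ q.1 q.2) (Set.Ioo (-ε₀) ε₀ ×ˢ S))
    {A : Set Y} (hA : A ⊆ S)
    (hbox : ∀ a b : ℝ, 0 ≤ a → a < b → b ≤ ε₀ →
      MeasurableSet {y : Y | ∃ p ∈ A, ∃ t : ℝ, a < t ∧ t < b ∧ y = φ t p})
    {ε₁ ε₂ : ℝ} (h₁ : ε₁ ∈ Set.Ioo 0 ε₀) (h₂ : ε₂ ∈ Set.Ioo 0 ε₀) :
    (ENNReal.ofReal ε₁)⁻¹ * μ (fb φ A 0 ε₁) ≤ (ENNReal.ofReal ε₂)⁻¹ * μ (fb φ A 0 ε₂) := by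
  obtain ⟨hε₁, hε₁'⟩ := h₁
  obtain ⟨hε₂, hε₂'⟩ := h₂
  by_cases hfin : μ (fb φ A 0 ε₂) = ⊤
  · rw [hfin, ENNReal.mul_top (ENNReal.inv_ne_zero.mpr ENNReal.ofReal_ne_top)]
    exact le_top
  -- main estimate for each n ≥ 1
  have main : ∀ n : ℕ, 1 ≤ n →
      μ (fb φ A 0 ε₁) ≤ ENNReal.ofReal ((ε₁ * (n + 1) / ε₂ + 1) / n) * μ (fb φ A 0 ε₂) := by
    intro n hn
    have hnR : (0:ℝ) < n := by exact_mod_cast hn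
    set δ : ℝ := ε₂ / (n + 1) with hδdef
    set δ' : ℝ := ε₂ / n with hδ'def
    have hδpos : 0 < δ := by positivity
    have hδ'pos : 0 < δ' := by positivity
    have hδlt : δ < δ' := by
      rw [hδdef, hδ'def, div_lt_div_iff₀ (by positivity) hnR]
      nlinarith
    set k : ℕ := ⌈ε₁ / δ⌉₊ with hkdef
    have hk1 : ε₁ ≤ k * δ := by
      have := Nat.le_ceil (ε₁ / δ)
      calc ε₁ = (ε₁ / δ) * δ := by field_simp
        _ ≤ k * δ := by nlinarith
    have hk2 : (k : ℝ) ≤ ε₁ / δ + 1 := by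
      have := Nat.ceil_lt_add_one (le_of_lt (div_pos hε₁ hδpos))
      linarith
    -- upper bound
    have hu1 : μ (fb φ A 0 ε₁) ≤ μ (fb φ A 0 (k * δ)) :=
      measure_mono (fb_mono le_rfl hk1)
    have hu2 : μ (fb φ A 0 (k * δ)) ≤ k * μ (fb φ A 0 δ') := by
      have := fb_upper hφadd hinv A k hδpos (sub_pos.mpr hδlt)
      rwa [add_sub_cancel] at this
    -- lower bound
    have hl : (n : ENNReal) * μ (fb φ A 0 δ') ≤ μ (fb φ A 0 ε₂) := by
      have hnδ' : (n : ℝ) * δ' ≤ ε₀ := by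
        rw [hδ'def]; field_simp
        linarith
      have := fb_lower hφadd hinv hinj hA hbox n hδ'pos hnδ'
      have hnd : (n:ℝ) * δ' = ε₂ := by rw [hδ'def]; field_simp
      rwa [hnd] at this
    -- finiteness
    have hd_fin : μ (fb φ A 0 δ') ≠ ⊤ := by
      intro h
      apply hfin
      refine top_le_iff.mp ?_
      calc (⊤ : ENNReal) = (n : ENNReal) * ⊤ := by
            rw [ENNReal.mul_top (by exact_mod_cast Nat.one_le_iff_ne_zero.mp hn : (n:ENNReal) ≠ 0)]
        _ = (n : ENNReal) * μ (fb φ A 0 δ') := by rw [h]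
        _ ≤ μ (fb φ A 0 ε₂) := hl
    -- pass to reals
    set d : ℝ := (μ (fb φ A 0 δ')).toReal with hd
    have hdnn : 0 ≤ d := ENNReal.toReal_nonneg
    set M : ℝ := (μ (fb φ A 0 ε₂)).toReal with hM
    have hnd2 : (n : ℝ) * d ≤ M := by
      have := ENNReal.toReal_mono hfin hl
      rw [ENNReal.toReal_mul] at this
      simpa using this
    have hμ1 : μ (fb φ A 0 ε₁) ≤ (k : ENNReal) * μ (fb φ A 0 δ') := hu1.trans hu2
    calc μ (fb φ A 0 ε₁) ≤ (k : ENNReal) * μ (fb φ A 0 δ') := hμ1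
      _ = ENNReal.ofReal ((k : ℝ) * d) := by
          rw [ENNReal.ofReal_mul (by positivity), ENNReal.ofReal_natCast,
            hd, ENNReal.ofReal_toReal hd_fin]
      _ ≤ ENNReal.ofReal (((ε₁ * (n + 1) / ε₂ + 1) / n) * M) := by
          apply ENNReal.ofReal_le_ofReal
          have hkb : (k:ℝ) ≤ ε₁ * (n + 1) / ε₂ + 1 := by
            have : ε₁ / δ = ε₁ * (n + 1) / ε₂ := by
              rw [hδdef]; field_simp
            linarith [hk2, this ▸ hk2]
          have hdM : d ≤ M / n := by
            rw [le_div_iff₀ hnR]; linarith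
          calc (k:ℝ) * d ≤ (ε₁ * (n + 1) / ε₂ + 1) * d := by nlinarith
            _ ≤ (ε₁ * (n + 1) / ε₂ + 1) * (M / n) := by
                have h0 : (0:ℝ) ≤ ε₁ * (n + 1) / ε₂ + 1 := by positivity
                nlinarith
            _ = ((ε₁ * (n + 1) / ε₂ + 1) / n) * M := by ring
      _ = ENNReal.ofReal ((ε₁ * (n + 1) / ε₂ + 1) / n) * μ (fb φ A 0 ε₂) := by
          rw [ENNReal.ofReal_mul (by positivity), hM, ENNReal.ofReal_toReal hfin]
  -- finiteness of μ (fb 0 ε₁)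
  have hfin1 : μ (fb φ A 0 ε₁) ≠ ⊤ := by
    intro h
    have := main 1 le_rfl
    rw [h, top_le_iff] at this
    exact (ENNReal.mul_ne_top ENNReal.ofReal_ne_top hfin) this
  set r : ℝ := (μ (fb φ A 0 ε₁)).toReal with hr
  set M : ℝ := (μ (fb φ A 0 ε₂)).toReal with hM
  have hMnn : 0 ≤ M := ENNReal.toReal_nonneg
  have hrn : ∀ n : ℕ, 1 ≤ n → r ≤ ((ε₁ * (n + 1) / ε₂ + 1) / n) * M := by
    intro n hn
    have := ENNReal.toReal_mono
      (by exact ENNReal.mul_ne_top ENNReal.ofReal_ne_top hfin) (main n hn)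
    rwa [ENNReal.toReal_mul, ENNReal.toReal_ofReal (by positivity)] at this
  -- limit
  have hlim : Filter.Tendsto (fun n : ℕ => ((ε₁ * (n + 1) / ε₂ + 1) / n) * M)
      Filter.atTop (nhds ((ε₁ / ε₂) * M)) := by
    have h1 : Filter.Tendsto (fun n : ℕ => (ε₁ / ε₂) * M + ((ε₁ / ε₂ + 1) * M) / n)
        Filter.atTop (nhds ((ε₁ / ε₂) * M + 0)) :=
      Filter.Tendsto.add tendsto_const_nhds
        (tendsto_const_div_atTop_nhds_zero_nat _)
    rw [add_zero] at h1
    apply h1.congr'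
    filter_upwards [Filter.eventually_ge_atTop 1] with n hn
    have hnR : (0:ℝ) < n := by exact_mod_cast hn
    field_simp
    ring
  have hrM : r ≤ (ε₁ / ε₂) * M := by
    refine ge_of_tendsto hlim ?_
    filter_upwards [Filter.eventually_ge_atTop 1] with n hn using hrn n hn
  -- conclude
  have hfinal : r / ε₁ ≤ M / ε₂ := by
    rw [div_le_div_iff₀ hε₁ hε₂]
    calc r * ε₂ ≤ ((ε₁ / ε₂) * M) * ε₂ := by nlinarith
      _ = M * ε₁ := by field_simp
  calc (ENNReal.ofReal ε₁)⁻¹ * μ (fb φ A 0 ε₁)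
      = ENNReal.ofReal (r / ε₁) := by
        rw [ENNReal.ofReal_div_of_pos hε₁, hr, ENNReal.ofReal_toReal hfin1,
          ENNReal.div_eq_inv_mul]
    _ ≤ ENNReal.ofReal (M / ε₂) := ENNReal.ofReal_le_ofReal hfinal
    _ = (ENNReal.ofReal ε₂)⁻¹ * μ (fb φ A 0 ε₂) := by
        rw [ENNReal.ofReal_div_of_pos hε₂, hM, ENNReal.ofReal_toReal hfin,
          ENNReal.div_eq_inv_mul]

end TMWDAux

/-!
STATEMENT 12: The transverse measure induced by an invariant measure is well
defined: if `φ` is a flow on `Y`, `μ` a `φ`-invariant measure, `S ⊆ Y` and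
`ε₀ > 0` are such that `(t,p) ↦ φ^t(p)` is injective on `(-ε₀,ε₀) × S`, then
for every measurable `A ⊆ S` the quantity
`ε⁻¹ μ({φ^t(p) : p ∈ A, 0 < t < ε})` is independent of `ε ∈ (0, ε₀)`.
(The flow boxes involved are assumed measurable, as in the paper.)
-/
theorem transverse_measure_well_defined {Y : Type*} [MeasurableSpace Y]
    (φ : ℝ → Y → Y)
    (hφ0 : φ 0 = id)
    (hφadd : ∀ t s : ℝ, φ (t + s) = φ t ∘ φ s)
    (μ : Measure Y)
    (hinv : ∀ (t : ℝ) (B : Set Y), μ (φ t '' B) = μ B)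
    (S : Set Y) (ε₀ : ℝ) (hε₀ : 0 < ε₀)
    (hinj : Set.InjOn (fun q : ℝ × Y => φ q.1 q.2) (Set.Ioo (-ε₀) ε₀ ×ˢ S))
    (A : Set Y) (hA : A ⊆ S) (hAmeas : MeasurableSet A)
    (hbox : ∀ a b : ℝ, 0 ≤ a → a < b → b ≤ ε₀ →
      MeasurableSet {y : Y | ∃ p ∈ A, ∃ t : ℝ, a < t ∧ t < b ∧ y = φ t p})
    (ε₁ ε₂ : ℝ) (h₁ : ε₁ ∈ Set.Ioo 0 ε₀) (h₂ : ε₂ ∈ Set.Ioo 0 ε₀) :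
    (ENNReal.ofReal ε₁)⁻¹ *
        μ {y : Y | ∃ p ∈ A, ∃ t : ℝ, 0 < t ∧ t < ε₁ ∧ y = φ t p}
      = (ENNReal.ofReal ε₂)⁻¹ *
        μ {y : Y | ∃ p ∈ A, ∃ t : ℝ, 0 < t ∧ t < ε₂ ∧ y = φ t p} := by
  exact le_antisymm
    (TMWDAux.fb_key hφadd hinv hinj hA hbox h₁ h₂)
    (TMWDAux.fb_key hφadd hinv hinj hA hbox h₂ h₁)
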